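/- Let p be an odd prime and let M(p) be the p×p complex matrix with (j,k)-entry ζ^{j(k−j)}, where ζ = e^{2πi/p} and 0 ≤ j,k ≤ p−1. Then M(p)^{2p} = ((−1)/p)·p^p·I, where ((−1)/p) is the Legendre symbol and I is the p×p identity matrix; in other words, X^{2p} − ((−1)/p)·p^p is an annihilating polynomial of M(p). -/

import Mathlib

open Matrix

namespace MmatAux
variable (p : ℕ) [Fact p.Prime]

/-- The standard additive character of `ZMod p` in `ℂ`. -/
noncomputable def ψ : AddChar (ZMod p) ℂ := ZMod.stdAddChar

/-- The quadratic character of `ZMod p`, valued in `ℂ`. -/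
noncomputable def χ : MulChar (ZMod p) ℂ :=
  (quadraticChar (ZMod p)).ringHomComp (Int.castRingHom ℂ)

/-- The quadratic Gauss sum. -/
noncomputable def g : ℂ := gaussSum (χ p) (ψ p)

/-- The "generalized quadratic Gauss" matrices. -/
noncomputable def Q (a b c : ZMod p) : Matrix (Fin p) (Fin p) ℂ :=
  fun j k => ψ p (a * ((j : ℕ) : ZMod p) ^ 2 + b * ((j : ℕ) : ZMod p) * ((k : ℕ) : ZMod p)
    + c * ((k : ℕ) : ZMod p) ^ 2)

def finZModEquiv : Fin p ≃ ZMod p where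
  toFun j := ((j : ℕ) : ZMod p)
  invFun x := ⟨x.val, x.val_lt⟩
  left_inv j := by
    ext
    simp [ZMod.val_natCast_of_lt j.isLt]
  right_inv x := by simp [ZMod.natCast_zmod_val]

lemma sum_fin (f : ZMod p → ℂ) : ∑ k : Fin p, f ((k : ℕ) : ZMod p) = ∑ x : ZMod p, f x :=
  Fintype.sum_equiv (finZModEquiv p) _ _ (fun _ => rfl)

lemma zpow_eq (n : ℤ) :
    Complex.exp (2 * Real.pi * Complex.I / p) ^ n = ψ p ((n : ZMod p)) := by
  rw [ψ, ZMod.stdAddChar_coe, ← Complex.exp_int_mul]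
  ring_nf

lemma two_ne (hodd : p ≠ 2) : (2 : ZMod p) ≠ 0 := by
  have : ((2 : ℕ) : ZMod p) ≠ 0 := by
    rw [Ne, ZMod.natCast_eq_zero_iff]
    exact fun h => hodd ((Nat.prime_dvd_prime_iff_eq (Fact.out) Nat.prime_two).mp h)
  simpa using this

lemma four_ne (hodd : p ≠ 2) : (4 : ZMod p) ≠ 0 := by
  have : (4 : ZMod p) = 2 * 2 := by norm_num
  rw [this]; exact mul_ne_zero (two_ne p hodd) (two_ne p hodd)

lemma ringChar_ne (hodd : p ≠ 2) : ringChar (ZMod p) ≠ 2 := by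
  rw [ZMod.ringChar_zmod_n]; exact hodd

lemma χ_ne_one (hodd : p ≠ 2) : χ p ≠ 1 :=
  (MulChar.ringHomComp_ne_one_iff (fun a b h => by simpa using h)).mpr
    (quadraticChar_ne_one (ringChar_ne p hodd))

lemma χ_quad : (χ p).IsQuadratic :=
  (quadraticChar_isQuadratic (ZMod p)).comp _

lemma ψ_prim : (ψ p).IsPrimitive := ZMod.isPrimitive_stdAddChar p

lemma χ_mul_self {s : ZMod p} (hs : s ≠ 0) : χ p s * χ p s = 1 := by
  rcases χ_quad p s with h | h | h
  · exact absurd (by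
      simp only [χ, MulChar.ringHomComp_apply, map_intCast, Int.cast_eq_zero, eq_intCast] at h
      norm_cast at h
      exact quadraticChar_eq_zero_iff.mp h) hs
  · rw [h]; norm_num
  · rw [h]; norm_num

lemma g_sq (hodd : p ≠ 2) : g p ^ 2 = χ p (-1) * p := by
  have := gaussSum_sq (χ_ne_one p hodd) (χ_quad p) (ψ_prim p)
  rwa [ZMod.card] at this

/-- The twisted quadratic Gauss sum. -/
lemma sum_sq (hodd : p ≠ 2) {s : ZMod p} (hs : s ≠ 0) :
    ∑ y : ZMod p, ψ p (s * y ^ 2) = χ p s * g p := by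
  classical
  have key : ∑ y : ZMod p, ψ p (s * y ^ 2)
      = ∑ x : ZMod p, (({y : ZMod p | y ^ 2 = x}.toFinset.card : ℂ)) * ψ p (s * x) := by
    rw [← Finset.sum_fiberwise Finset.univ (fun y : ZMod p => y ^ 2)
      (fun y => ψ p (s * y ^ 2))]
    refine Finset.sum_congr rfl fun x _ => ?_
    rw [Finset.sum_congr rfl (fun y hy => ?_), Finset.sum_const, nsmul_eq_mul]
    · congr 2
      apply Finset.card_bij (fun y _ => y) <;> simp [Set.mem_toFinset]
    · simp only [Finset.mem_filter] at hy
      rw [hy.2]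
  rw [key]
  have h2 : ∀ x : ZMod p, (({y : ZMod p | y ^ 2 = x}.toFinset.card : ℂ))
      = 1 + χ p x := by
    intro x
    have := quadraticChar_card_sqrts (ringChar_ne p hodd) x
    have h' : (({y : ZMod p | y ^ 2 = x}.toFinset.card : ℤ) : ℂ)
        = ((quadraticChar (ZMod p) x + 1 : ℤ) : ℂ) := by rw [this]
    push_cast at h'
    rw [h']
    simp [χ, MulChar.ringHomComp]
    ring
  simp_rw [h2, add_mul, one_mul]
  rw [Finset.sum_add_distrib]
  have hz : ∑ x : ZMod p, ψ p (s * x) = 0 := by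
    have h := AddChar.sum_mulShift s (ψ_prim p)
    rw [if_neg hs] at h
    push_cast at h
    rw [← h]
    refine Finset.sum_congr rfl fun x _ => by rw [mul_comm]
  rw [hz, zero_add]
  have : ∑ x : ZMod p, χ p x * ψ p (s * x) = gaussSum (χ p) ((ψ p).mulShift s) := by
    simp [gaussSum, AddChar.mulShift_apply]
  rw [this]
  have hu := gaussSum_mulShift (χ p) (ψ p) (Units.mk0 s hs)
  have : χ p s * gaussSum (χ p) ((ψ p).mulShift s) = g p := by
    simpa [g] using hu
  calc gaussSum (χ p) ((ψ p).mulShift s)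
      = (χ p s * χ p s) * gaussSum (χ p) ((ψ p).mulShift s) := by
        rw [χ_mul_self p hs, one_mul]
    _ = χ p s * g p := by rw [mul_assoc, this]

lemma Q_mul (hodd : p ≠ 2) (a b c a' b' c' s : ZMod p) (hs : s ≠ 0) (h : c + a' = s) :
    Q p a b c * Q p a' b' c'
      = (χ p s * g p) • Q p (a - b ^ 2 / (4 * s)) (-(b * b') / (2 * s))
          (c' - b' ^ 2 / (4 * s)) := by
  have h2 : (2 : ZMod p) ≠ 0 := two_ne p hodd
  have h4 : (4 : ZMod p) ≠ 0 := four_ne p hodd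
  ext j l
  set J : ZMod p := ((j : ℕ) : ZMod p) with hJ
  set L : ZMod p := ((l : ℕ) : ZMod p) with hL
  set d : ZMod p := (b * J + b' * L) / (2 * s) with hd
  set C : ZMod p := a * J ^ 2 + c' * L ^ 2 - (b * J + b' * L) ^ 2 / (4 * s) with hC
  simp only [Matrix.mul_apply, Q, Matrix.smul_apply, smul_eq_mul, ← hJ, ← hL]
  have key : ∀ k : Fin p,
      ψ p (a * J ^ 2 + b * J * ((k : ℕ) : ZMod p) + c * ((k : ℕ) : ZMod p) ^ 2) *
        ψ p (a' * ((k : ℕ) : ZMod p) ^ 2 + b' * ((k : ℕ) : ZMod p) * L + c' * L ^ 2)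
      = ψ p (s * (((k : ℕ) : ZMod p) + d) ^ 2) * ψ p C := by
    intro k
    rw [← AddChar.map_add_eq_mul, ← AddChar.map_add_eq_mul]
    congr 1
    subst h
    rw [hd, hC]
    field_simp
    ring
  rw [Finset.sum_congr rfl (fun k _ => key k), ← Finset.sum_mul]
  have : ∑ k : Fin p, ψ p (s * (((k : ℕ) : ZMod p) + d) ^ 2)
      = ∑ x : ZMod p, ψ p (s * (x + d) ^ 2) := sum_fin p (fun x => ψ p (s * (x + d) ^ 2))
  rw [this]
  have : ∑ x : ZMod p, ψ p (s * (x + d) ^ 2) = ∑ y : ZMod p, ψ p (s * y ^ 2) :=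
    Fintype.sum_equiv (Equiv.addRight d) _ _ (fun x => rfl)
  rw [this, sum_sq p hodd hs]
  congr 1
  congr 1
  rw [hC]
  field_simp
  ring

lemma Q_degenerate : Q p 0 (-1) 1 * Q p (-1) 1 0 = (p : ℂ) • 1 := by
  ext j l
  set J : ZMod p := ((j : ℕ) : ZMod p) with hJ
  set L : ZMod p := ((l : ℕ) : ZMod p) with hL
  simp only [Matrix.mul_apply, Q, Matrix.smul_apply, smul_eq_mul, ← hJ, ← hL]
  have key : ∀ k : Fin p,
      ψ p (0 * J ^ 2 + -1 * J * ((k : ℕ) : ZMod p) + 1 * ((k : ℕ) : ZMod p) ^ 2) *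
        ψ p (-1 * ((k : ℕ) : ZMod p) ^ 2 + 1 * ((k : ℕ) : ZMod p) * L + 0 * L ^ 2)
      = ψ p (((k : ℕ) : ZMod p) * (L - J)) := by
    intro k
    rw [← AddChar.map_add_eq_mul]
    congr 1
    ring
  rw [Finset.sum_congr rfl (fun k _ => key k)]
  have : ∑ k : Fin p, ψ p (((k : ℕ) : ZMod p) * (L - J))
      = ∑ x : ZMod p, ψ p (x * (L - J)) := sum_fin p (fun x => ψ p (x * (L - J)))
  rw [this, AddChar.sum_mulShift (L - J) (show (ψ p).IsPrimitive from
    ZMod.isPrimitive_stdAddChar p)]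
  have hinj : L - J = 0 ↔ j = l := by
    constructor
    · intro hh
      have : L = J := by linear_combination hh
      rw [hJ, hL] at this
      have := congrArg ZMod.val this
      rw [ZMod.val_natCast_of_lt l.isLt, ZMod.val_natCast_of_lt j.isLt] at this
      exact Fin.ext this.symm
    · rintro rfl; simp [hJ, hL]
  by_cases hjl : j = l
  · rw [if_pos (hinj.mpr hjl), hjl, Matrix.one_apply_eq, mul_one, ZMod.card]
  · rw [if_neg (fun hh => hjl (hinj.mp hh)), Matrix.one_apply_ne hjl, mul_zero]
    norm_num

end MmatAux

/-- The `p×p` complex matrix `M(p)` with `(j,k)`-entry `ζ^{j(k−j)}`, where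
`ζ = e^{2πi/p}` and `0 ≤ j, k ≤ p−1`. -/
noncomputable def Mmat (p : ℕ) : Matrix (Fin p) (Fin p) ℂ :=
  fun j k => Complex.exp (2 * Real.pi * Complex.I / p) ^ ((j : ℤ) * ((k : ℤ) - (j : ℤ)))

namespace MmatAux
variable (p : ℕ) [Fact p.Prime]

lemma Mmat_eq : Mmat p = Q p (-1) 1 0 := by
  ext j k
  rw [Mmat, Q, zpow_eq]
  congr 1
  push_cast
  ring

lemma natCast_ne {n : ℕ} (h1 : 1 ≤ n) (h2 : n ≤ p - 1) : (n : ZMod p) ≠ 0 := by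
  have hp : 2 ≤ p := (Fact.out : p.Prime).two_le
  rw [Ne, ZMod.natCast_eq_zero_iff]
  intro hdvd
  have := Nat.le_of_dvd (by omega) hdvd
  omega

lemma key (hodd : p ≠ 2) : ∀ n : ℕ, 1 ≤ n → n ≤ p - 1 →
    ∃ γ : ℂ, γ ^ 2 = (χ p (-1) * p) ^ (n - 1) ∧
      Mmat p ^ n = γ • Q p (-(1 + (n : ZMod p)) / (2 * (n : ZMod p)))
        (1 / (n : ZMod p)) (-(1 - (n : ZMod p)) / (2 * (n : ZMod p))) := by
  have h2 : (2 : ZMod p) ≠ 0 := two_ne p hodd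
  intro n hn
  induction n, hn using Nat.le_induction with
  | base =>
    intro _
    refine ⟨1, by norm_num, ?_⟩
    rw [pow_one, Mmat_eq, one_smul]
    have e1 : -(1 + ((1 : ℕ) : ZMod p)) / (2 * ((1 : ℕ) : ZMod p)) = -1 := by
      push_cast; field_simp; ring
    have e2 : 1 / ((1 : ℕ) : ZMod p) = 1 := by push_cast; norm_num
    have e3 : -(1 - ((1 : ℕ) : ZMod p)) / (2 * ((1 : ℕ) : ZMod p)) = 0 := by
      push_cast; norm_num
    rw [e1, e2, e3]
  | succ n hn IH =>
    intro hle
    have hn1 : n ≤ p - 1 := by omega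
    obtain ⟨γ, hγ, hM⟩ := IH hn1
    have hnz : (n : ZMod p) ≠ 0 := natCast_ne p hn hn1
    have hnz1 : ((n : ZMod p) + 1) ≠ 0 := by
      have : (((n + 1 : ℕ)) : ZMod p) ≠ 0 := natCast_ne p (by omega) hle
      push_cast at this
      exact this
    set nz : ZMod p := (n : ZMod p) with hnzdef
    obtain ⟨s, hsdef⟩ : ∃ s : ZMod p, s = -(nz + 1) / (2 * nz) := ⟨_, rfl⟩
    have hs : s ≠ 0 := by
      rw [hsdef]
      exact div_ne_zero (neg_ne_zero.mpr hnz1) (mul_ne_zero h2 hnz)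
    have hsum : -(1 - nz) / (2 * nz) + -1 = s := by
      rw [hsdef]; field_simp; ring
    have h4 : (4 : ZMod p) ≠ 0 := by
      rw [show (4 : ZMod p) = 2 * 2 from by norm_num]; exact mul_ne_zero h2 h2
    have hs2 : 2 * nz * s = -(nz + 1) := by
      rw [hsdef]; field_simp
    have step : Mmat p ^ (n + 1)
        = (γ * (χ p s * g p)) • Q p
          ((-(1 + nz) / (2 * nz)) - (1 / nz) ^ 2 / (4 * s))
          (-((1 / nz) * 1) / (2 * s))
          (0 - 1 ^ 2 / (4 * s)) := by
      rw [pow_succ, hM, Matrix.smul_mul, Mmat_eq, Q_mul p hodd _ _ _ _ _ _ s hs hsum,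
        smul_smul]
    have e1 : (-(1 + nz) / (2 * nz)) - (1 / nz) ^ 2 / (4 * s)
        = -(1 + ((n + 1 : ℕ) : ZMod p)) / (2 * ((n + 1 : ℕ) : ZMod p)) := by
      push_cast
      rw [← hnzdef]
      field_simp
      linear_combination (-2 : ZMod p) * hs2
    have e2 : -((1 / nz) * 1) / (2 * s) = 1 / ((n + 1 : ℕ) : ZMod p) := by
      push_cast
      rw [← hnzdef]
      field_simp
      linear_combination (-1 : ZMod p) * hs2
    have e3 : (0 : ZMod p) - 1 ^ 2 / (4 * s)
        = -(1 - ((n + 1 : ℕ) : ZMod p)) / (2 * ((n + 1 : ℕ) : ZMod p)) := by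
      push_cast
      rw [← hnzdef]
      field_simp
      linear_combination (-2 : ZMod p) * hs2
    refine ⟨γ * (χ p s * g p), ?_, by rw [step, e1, e2, e3]⟩
    have expand : (γ * (χ p s * g p)) ^ 2 = γ ^ 2 * ((χ p s * χ p s) * g p ^ 2) := by ring
    rw [expand, χ_mul_self p hs, one_mul, g_sq p hodd, hγ, ← pow_succ]
    congr 1
    omega

end MmatAux

open MmatAux in
/-- Let `p` be an odd prime.  Then `M(p)^{2p} = ((−1)/p)·p^p·I`, where `((−1)/p)` is the
Legendre symbol; in other words `X^{2p} − ((−1)/p)·p^p` annihilates `M(p)`. -/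
theorem Mmat_pow_two_p (p : ℕ) [Fact p.Prime] (hodd : p ≠ 2) :
    Mmat p ^ (2 * p) =
      ((legendreSym p (-1) : ℂ) * (p : ℂ) ^ p) • (1 : Matrix (Fin p) (Fin p) ℂ) := by
  have hp : 2 ≤ p := (Fact.out : p.Prime).two_le
  have hp3 : 3 ≤ p := by
    rcases Nat.lt_or_ge p 3 with h | h
    · interval_cases p <;> simp_all
    · exact h
  have h2 : (2 : ZMod p) ≠ 0 := two_ne p hodd
  obtain ⟨γ, hγ, hM⟩ := key p hodd (p - 1) (by omega) le_rfl
  have hcast : (((p - 1 : ℕ)) : ZMod p) = -1 := by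
    push_cast [Nat.cast_sub (by omega : 1 ≤ p)]
    simp
  rw [hcast] at hM
  have e1 : -(1 + (-1 : ZMod p)) / (2 * (-1)) = 0 := by norm_num
  have e2 : (1 : ZMod p) / (-1) = -1 := by norm_num
  have e3 : -(1 - (-1 : ZMod p)) / (2 * (-1)) = 1 := by
    rw [show -(1 - (-1 : ZMod p)) = -2 from by ring, show (2 : ZMod p) * (-1) = -2 from by ring]
    exact div_self (neg_ne_zero.mpr h2)
  rw [e1, e2, e3] at hM
  have hMp : Mmat p ^ p = (γ * p) • 1 := by
    have hsucc : p - 1 + 1 = p := by omega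
    calc Mmat p ^ p = Mmat p ^ (p - 1) * Mmat p := by rw [← pow_succ, hsucc]
    _ = γ • (Q p 0 (-1) 1 * Q p (-1) 1 0) := by rw [hM, Mmat_eq, Matrix.smul_mul]
    _ = (γ * p) • 1 := by rw [Q_degenerate, smul_smul]
  have : Mmat p ^ (2 * p) = ((γ * p) ^ 2) • 1 := by
    rw [mul_comm 2 p, pow_mul, hMp, smul_pow, one_pow]
  rw [this]
  congr 1
  have hγ2 : (γ * p) ^ 2 = (χ p (-1) * p) ^ (p - 2) * (p : ℂ) ^ 2 := by
    rw [mul_pow, hγ, Nat.sub_sub]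
  rw [hγ2]
  have hleg : χ p (-1) = (legendreSym p (-1) : ℂ) := by
    simp [χ, legendreSym, MulChar.ringHomComp_apply]
  have hee : χ p (-1) * χ p (-1) = 1 :=
    χ_mul_self p (neg_ne_zero.mpr one_ne_zero)
  obtain ⟨k, hk⟩ := (Fact.out : p.Prime).odd_of_ne_two hodd
  have hk1 : 1 ≤ k := by omega
  have hodd2 : p - 2 = 2 * (k - 1) + 1 := by omega
  have hepow : χ p (-1) ^ (p - 2) = χ p (-1) := by
    rw [hodd2, pow_succ, pow_mul]
    have : χ p (-1) ^ 2 = 1 := by rw [sq, hee]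
    rw [this, one_pow, one_mul]
  rw [mul_pow, hepow, hleg]
  rw [mul_assoc, ← pow_add]
  congr 2
  omega
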